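/- arXiv:1007.4644 — 5 statements merged into one kernel-verified Lean document; each statement's English description precedes it below -/
import Mathlib

section
/- There exists a point p ∈ C(A) ∩ ℤ^r such that every point of (p + C(A)) ∩ ℤ^r is a linear combination of a_1, …, a_N with nonnegative integer coefficients. -/
open scoped BigOperators

/-- The lattice of integer relations among the vectors `a j`. -/
def latticeL {r N : ℕ} (a : Fin N → Fin r → ℤ) : Set (Fin N → ℤ) :=
  {l | ∑ j, l j • a j = 0}

/-- The cone `C(A)` of nonnegative real linear combinations of the `a j`, inside `ℝ^r`. -/
def coneA {r N : ℕ} (a : Fin N → Fin r → ℤ) : Set (Fin r → ℝ) :=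
  {x | ∃ c : Fin N → ℝ, (∀ j, 0 ≤ c j) ∧ x = ∑ j, c j • (fun k => (a j k : ℝ))}

/-- There exists `p ∈ C(A) ∩ ℤ^r` such that every point of `(p + C(A)) ∩ ℤ^r` is a
nonnegative integer combination of `a_1, …, a_N`. -/
theorem stmt_0 (r N : ℕ) (hr : 1 ≤ r) (hrN : r < N)
    (a : Fin N → Fin r → ℤ)
    (hspan : Submodule.span ℤ (Set.range a) = ⊤)
    (h : (Fin r → ℤ) →ₗ[ℤ] ℤ) (hh : ∀ j, h (a j) = 1) :
    ∃ p : Fin r → ℤ, (fun k => (p k : ℝ)) ∈ coneA a ∧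
      ∀ n : Fin r → ℤ, (fun k => ((n k : ℝ) - (p k : ℝ))) ∈ coneA a →
        ∃ c : Fin N → ℕ, n = ∑ j, (c j : ℤ) • a j := by
  classical
  -- the finite set of possible "fractional parts"
  set F : Set (Fin r → ℤ) :=
    {f | ∃ s : Fin N → ℝ, (∀ j, 0 ≤ s j ∧ s j < 1) ∧
      (∀ k, (f k : ℝ) = ∑ j, s j * (a j k : ℝ))} with hF
  have hFfin : F.Finite := by
    set B : Fin r → ℤ := fun k => ∑ j, |a j k| with hB
    apply Set.Finite.subset (Set.finite_Icc (-B) B)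
    rintro f ⟨s, hs, hfe⟩
    have hb : ∀ k, |f k| ≤ B k := by
      intro k
      have : |(f k : ℝ)| ≤ (B k : ℝ) := by
        rw [hfe k]
        calc |∑ j, s j * (a j k : ℝ)| ≤ ∑ j, |s j * (a j k : ℝ)| :=
              Finset.abs_sum_le_sum_abs _ _
          _ ≤ ∑ j, |(a j k : ℝ)| := by
              apply Finset.sum_le_sum
              intro j _
              rw [abs_mul]
              have h1 : |s j| ≤ 1 := by
                rw [abs_le]; constructor <;> nlinarith [(hs j).1, (hs j).2]
              nlinarith [abs_nonneg ((a j k : ℝ))]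
          _ = (B k : ℝ) := by rw [hB]; push_cast; ring
      exact_mod_cast this
    constructor
    · intro k; have := hb k; simp only [Pi.neg_apply]; linarith [(abs_le.mp (hb k)).1]
    · intro k; linarith [(abs_le.mp (hb k)).2]
  -- integer representation of any integer vector
  have hrep : ∀ f : Fin r → ℤ, ∃ c : Fin N → ℤ, ∑ j, c j • a j = f := by
    intro f
    have : f ∈ Submodule.span ℤ (Set.range a) := by rw [hspan]; trivial
    exact (Submodule.mem_span_range_iff_exists_fun ℤ).mp this
  choose d hd using hrep
  set Fs := hFfin.toFinset with hFs
  set M : ℕ := Fs.sup (fun f => Finset.univ.sup fun j => (d f j).natAbs) with hM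
  have hMle : ∀ f ∈ Fs, ∀ j, (d f j).natAbs ≤ M := by
    intro f hf j
    calc (d f j).natAbs ≤ Finset.univ.sup fun j => (d f j).natAbs :=
          Finset.le_sup (f := fun j => (d f j).natAbs) (Finset.mem_univ j)
      _ ≤ M := by
          rw [hM]
          exact Finset.le_sup (f := fun f => Finset.univ.sup fun j => (d f j).natAbs) hf
  refine ⟨∑ j, (M : ℤ) • a j, ?_, ?_⟩
  · refine ⟨fun _ => (M : ℝ), fun _ => by positivity, ?_⟩
    funext k
    simp only [Finset.sum_apply, Pi.smul_apply, smul_eq_mul]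
    push_cast
    ring
  · intro n hn
    obtain ⟨t, ht0, hte⟩ := hn
    have hte' : ∀ k, (n k : ℝ) - ((∑ j, (M : ℤ) • a j) k : ℝ) = ∑ j, t j * (a j k : ℝ) := by
      intro k
      have := congrFun hte k
      simpa [Finset.sum_apply, smul_eq_mul] using this
    set m : Fin N → ℤ := fun j => ⌊t j⌋ with hm
    set f : Fin r → ℤ := fun k => n k - (∑ j, (M : ℤ) • a j) k - (∑ j, m j • a j) k with hf'
    have hfF : f ∈ Fs := by
      rw [hFs, Set.Finite.mem_toFinset]
      refine ⟨fun j => Int.fract (t j), fun j => ⟨Int.fract_nonneg _, Int.fract_lt_one _⟩, ?_⟩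
      intro k
      have h1 := hte' k
      simp only [Finset.sum_apply, Pi.smul_apply, smul_eq_mul] at h1
      push_cast at h1
      simp only [hf', Finset.sum_apply, Pi.smul_apply, smul_eq_mul, Int.fract, hm]
      push_cast
      simp only [sub_mul, Finset.sum_sub_distrib]
      linarith [h1]
    have hmn : ∀ j, 0 ≤ m j := fun j => Int.floor_nonneg.mpr (ht0 j)
    have hdge : ∀ j, 0 ≤ (M : ℤ) + m j + d f j := by
      intro j
      have h1 : (d f j).natAbs ≤ M := hMle f hfF j
      have h2 := hmn j
      omega
    refine ⟨fun j => ((M : ℤ) + m j + d f j).toNat, ?_⟩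
    have hcast : ∀ j, ((((M : ℤ) + m j + d f j).toNat : ℤ)) = (M : ℤ) + m j + d f j :=
      fun j => Int.toNat_of_nonneg (hdge j)
    have hfd := hd f
    funext k
    have h2 := congrFun hfd k
    simp only [Finset.sum_apply, Pi.smul_apply, smul_eq_mul] at h2 ⊢
    have hfk : f k = n k - (∑ j, (M : ℤ) * a j k) - (∑ j, m j * a j k) := by
      simp [hf', Finset.sum_apply]
    rw [hfk] at h2
    calc n k = ∑ j, ((M : ℤ) + m j + d f j) * a j k := by
          simp only [add_mul, Finset.sum_add_distrib]
          linarith [h2]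
      _ = ∑ j, (((M : ℤ) + m j + d f j).toNat : ℤ) * a j k := by
          refine Finset.sum_congr rfl fun j _ => by rw [hcast j]
end

section
/- Let I ⊆ {1, …, N} with |I| = N − r be such that the vectors a_i for i ∉ I are linearly independent over ℝ, and let α ∈ ℂ^r. Consider the set G of all γ ∈ ℂ^N such that ∑_{j=1}^N γ_j a_j = α (identifying each a_j with its image in ℂ^r) and γ_i ∈ ℤ for all i ∈ I. Then G is nonempty, and the number of equivalence classes of G under translation by elements of L is exactly |det M|, where M is the r × r matrix whose columns are the vectors a_i with i ∉ I. -/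
open scoped BigOperators

/-- The set `G` of parameters `γ ∈ ℂ^N` with `∑ γ_j a_j = α` and `γ_i ∈ ℤ` for `i ∈ I`. -/
def paramSet {r N : ℕ} (a : Fin N → Fin r → ℤ) (I : Finset (Fin N)) (α : Fin r → ℂ) :
    Set (Fin N → ℂ) :=
  {γ | (∑ j, γ j • fun k => ((a j k : ℤ) : ℂ)) = α ∧ ∀ i ∈ I, ∃ z : ℤ, γ i = (z : ℂ)}

/-!
Let `M` be the matrix with columns `a_i`, `i ∉ I`; it is invertible over `ℂ`. A point of `G` is
determined by its integer coordinates `x` on `I`, the others being `M⁻¹ (α - ∑_{i ∈ I} x_i a_i)`.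
Two such points differ by an element of `L` exactly when the integer vectors `∑_{i ∈ I} x_i a_i`
agree modulo `M ℤ^r`, and every class of `ℤ^r ⧸ M ℤ^r` occurs because the `a_j` span `ℤ^r`.
So the classes of `G` modulo `L` correspond to `ℤ^r ⧸ M ℤ^r`, which has `|det M|` elements by the
Smith normal form.
-/

open Matrix

theorem Matrix.isUnit_det_map_intCast {n K : Type*} [Fintype n] [DecidableEq n] [Field K]
    [CharZero K] {M : Matrix n n ℤ} (hM : M.det ≠ 0) :
    IsUnit (M.map (Int.cast : ℤ → K)).det := by
  rw [isUnit_iff_ne_zero, show M.map (Int.cast : ℤ → K) = (Int.castRingHom K).mapMatrix M from rfl,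
    ← RingHom.map_det, eq_intCast]
  exact_mod_cast hM

theorem Matrix.map_intCast_mulVec {n K : Type*} [Fintype n] [Ring K] (M : Matrix n n ℤ)
    (y : n → ℤ) :
    (fun k => ((M *ᵥ y) k : K)) = M.map (Int.cast : ℤ → K) *ᵥ fun k => (y k : K) :=
  funext fun k => RingHom.map_mulVec (Int.castRingHom K) M y k

theorem Matrix.mulVec_eq_iff_eq_inv_mulVec {n K : Type*} [Fintype n] [DecidableEq n] [Field K]
    {M : Matrix n n K} (hM : IsUnit M.det) (v w : n → K) : M *ᵥ v = w ↔ v = M⁻¹ *ᵥ w := by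
  constructor <;> rintro rfl
  · rw [mulVec_mulVec, nonsing_inv_mul _ hM, one_mulVec]
  · rw [mulVec_mulVec, mul_nonsing_inv _ hM, one_mulVec]

theorem Matrix.natCard_quotient_range_toLin' {n : Type*} [Fintype n] [DecidableEq n]
    (M : Matrix n n ℤ) (hM : M.det ≠ 0) :
    Nat.card ((n → ℤ) ⧸ LinearMap.range M.toLin') = M.det.natAbs := by
  have hinj : Function.Injective M.toLin' := fun v w hvw =>
    sub_eq_zero.mp (eq_zero_of_mulVec_eq_zero hM (by
      simpa [mulVec_sub, sub_eq_zero] using hvw))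
  rw [← Submodule.natAbs_det_equiv _ (LinearEquiv.ofInjective _ hinj), ← LinearMap.det_toLin']
  rfl

theorem Function.Surjective.exists_finset_transversal {X Y Q : Type*} [Finite Q]
    {g : X → Y} {ψ : X → Q} (hψ : Function.Surjective ψ) (R : Y → Y → Prop)
    (hR : ∀ x x', R (g x) (g x') ↔ ψ x = ψ x') :
    ∃ S : Finset Y, ↑S ⊆ Set.range g ∧ S.card = Nat.card Q ∧
      ∀ x, ∃! y, y ∈ S ∧ R (g x) y := by
  classical
  have := Fintype.ofFinite Q
  set s := Function.surjInv hψ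
  have hs : ∀ q, ψ (s q) = q := Function.surjInv_eq hψ
  have hinj : Function.Injective (g ∘ s) := fun q q' hq => by
    rw [← hs q, ← hs q', ← hR]
    exact (congrArg _ hq).mp ((hR _ _).mpr rfl)
  refine ⟨Finset.univ.image (g ∘ s), ?_, ?_, fun x => ?_⟩
  · rw [Finset.coe_image, Finset.coe_univ, Set.image_univ]
    exact Set.range_comp_subset_range s g
  · rw [Finset.card_image_of_injective _ hinj, Finset.card_univ, Nat.card_eq_fintype_card]
  · refine ⟨g (s (ψ x)), ⟨by simp, (hR _ _).mpr (hs _).symm⟩, ?_⟩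
    rintro y ⟨hy, hxy⟩
    obtain ⟨q, -, rfl⟩ := Finset.mem_image.mp hy
    rw [Function.comp_apply, (hR _ _).mp hxy, hs]

section NonbasicCoordinates

variable {r N : ℕ} (a : Fin N → Fin r → ℤ) {I : Finset (Fin N)}
  (e : Fin r ≃ {i : Fin N // i ∉ I})

def nonbasicMatrix : Matrix (Fin r) (Fin r) ℤ := Matrix.of fun k j => a (e j).1 k

theorem nonbasicMatrix_det_ne_zero
    (hind : LinearIndependent ℝ (fun i : {i : Fin N // i ∉ I} => fun k => (a i.1 k : ℝ))) :
    (nonbasicMatrix a e).det ≠ 0 := by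
  have hunit : IsUnit ((nonbasicMatrix a e).map (Int.cast : ℤ → ℝ)) :=
    linearIndependent_cols_iff_isUnit.mp (hind.comp e e.injective)
  rw [← Int.cast_ne_zero (α := ℝ), ← eq_intCast (Int.castRingHom ℝ), RingHom.map_det]
  exact ((isUnit_iff_isUnit_det _).mp hunit).ne_zero

theorem eq_of_eqOn_of_comp_eq {β : Type*} {γ γ' : Fin N → β} (hI : ∀ i ∈ I, γ i = γ' i)
    (he : (fun k => γ (e k)) = fun k => γ' (e k)) : γ = γ' := by
  funext j
  by_cases hj : j ∈ I
  · exact hI j hj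
  · simpa using congrFun he (e.symm ⟨j, hj⟩)

theorem sum_smul_eq_sum_add_mulVec {R : Type*} [CommRing R] (c : Fin N → R) :
    ∑ j, c j • (fun k => (a j k : R)) = ∑ i ∈ I, c i • (fun k => (a i k : R)) +
      (nonbasicMatrix a e).map (Int.cast : ℤ → R) *ᵥ fun k => c (e k) := by
  classical
  rw [← Finset.sum_add_sum_compl I, Finset.sum_subtype Iᶜ (p := (· ∉ I)) (by simp),
    ← e.sum_comp]
  congr 1
  funext l
  simp [mulVec, dotProduct, nonbasicMatrix, mul_comm]

theorem sum_smul_eq_sum_add_mulVec_int (c : Fin N → ℤ) :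
    ∑ j, c j • a j = ∑ i ∈ I, c i • a i + nonbasicMatrix a e *ᵥ fun k => c (e k) := by
  have hcast : (Int.cast : ℤ → ℤ) = id := funext fun _ => Int.cast_id
  simpa only [hcast, map_id, id] using sum_smul_eq_sum_add_mulVec a e c

theorem intCast_sum_smul (x : Fin N → ℤ) :
    (fun k => ((∑ i ∈ I, x i • a i) k : ℂ)) = ∑ i ∈ I, (x i : ℂ) • fun k => (a i k : ℂ) := by
  ext k
  simp

variable (α : Fin r → ℂ)

theorem sum_smul_eq_iff_comp_eq_inv_mulVec (hM : (nonbasicMatrix a e).det ≠ 0)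
    (γ : Fin N → ℂ) :
    (∑ j, γ j • fun k => (a j k : ℂ)) = α ↔ (fun k => γ (e k)) =
      ((nonbasicMatrix a e).map (Int.cast : ℤ → ℂ))⁻¹ *ᵥ
        (α - ∑ i ∈ I, γ i • fun k => (a i k : ℂ)) := by
  rw [sum_smul_eq_sum_add_mulVec a e, ← mulVec_eq_iff_eq_inv_mulVec (isUnit_det_map_intCast hM),
    eq_sub_iff_add_eq']

noncomputable def paramPoint (x : Fin N → ℤ) : Fin N → ℂ := fun j =>
  if h : j ∈ I then x j
  else (((nonbasicMatrix a e).map (Int.cast : ℤ → ℂ))⁻¹ *ᵥ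
    (α - fun k => ((∑ i ∈ I, x i • a i) k : ℂ))) (e.symm ⟨j, h⟩)

def residueClass (x : Fin N → ℤ) : (Fin r → ℤ) ⧸ LinearMap.range (nonbasicMatrix a e).toLin' :=
  Submodule.Quotient.mk (∑ i ∈ I, x i • a i)

variable {a e α}

theorem paramPoint_of_mem {x : Fin N → ℤ} {i : Fin N} (hi : i ∈ I) :
    paramPoint a e α x i = x i :=
  dif_pos hi

theorem paramPoint_comp (x : Fin N → ℤ) :
    (fun k => paramPoint a e α x (e k)) = ((nonbasicMatrix a e).map (Int.cast : ℤ → ℂ))⁻¹ *ᵥ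
      (α - fun k => ((∑ i ∈ I, x i • a i) k : ℂ)) := by
  funext k
  simp [paramPoint, (e k).2]

theorem paramPoint_mem (hM : (nonbasicMatrix a e).det ≠ 0) (x : Fin N → ℤ) :
    paramPoint a e α x ∈ paramSet a I α := by
  refine ⟨(sum_smul_eq_iff_comp_eq_inv_mulVec a e α hM _).mpr ?_,
    fun i hi => ⟨x i, paramPoint_of_mem hi⟩⟩
  rw [paramPoint_comp, intCast_sum_smul]
  congr 2
  exact Finset.sum_congr rfl fun i hi => by rw [paramPoint_of_mem hi]

theorem range_paramPoint (hM : (nonbasicMatrix a e).det ≠ 0) :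
    Set.range (paramPoint a e α) = paramSet a I α := by
  refine (Set.range_subset_iff.mpr (paramPoint_mem hM)).antisymm ?_
  rintro γ ⟨hsum, hint⟩
  choose z hz using hint
  set x : Fin N → ℤ := fun i => if h : i ∈ I then z i h else 0
  have hx : ∀ i ∈ I, γ i = x i := fun i hi => by simp [x, hi, hz]
  refine ⟨x, eq_of_eqOn_of_comp_eq e (fun i hi => by rw [paramPoint_of_mem hi, hx i hi]) ?_⟩
  rw [paramPoint_comp, (sum_smul_eq_iff_comp_eq_inv_mulVec a e α hM γ).mp hsum,
    intCast_sum_smul]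
  congr 2
  exact Finset.sum_congr rfl fun i hi => by rw [hx i hi]

theorem residueClass_surjective (hspan : Submodule.span ℤ (Set.range a) = ⊤) :
    Function.Surjective (residueClass a e) := by
  rintro ⟨v⟩
  have hv : v ∈ Submodule.span ℤ (Set.range a) := hspan ▸ Submodule.mem_top
  obtain ⟨c, hc⟩ := (Submodule.mem_span_range_iff_exists_fun ℤ).mp hv
  refine ⟨c, (Submodule.Quotient.eq _).mpr ⟨-fun k => c (e k), ?_⟩⟩
  rw [← hc, sum_smul_eq_sum_add_mulVec_int a e, toLin'_apply, mulVec_neg]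
  abel

theorem residueClass_eq_of_paramPoint_eq_add {x x' l : Fin N → ℤ} (hl : l ∈ latticeL a)
    (hxl : paramPoint a e α x = paramPoint a e α x' + fun j => (l j : ℂ)) :
    residueClass a e x = residueClass a e x' := by
  have hI : ∀ i ∈ I, x i = x' i + l i := fun i hi => by
    have := congrFun hxl i
    rw [Pi.add_apply, paramPoint_of_mem hi, paramPoint_of_mem hi] at this
    exact_mod_cast this
  have hl' : ∑ i ∈ I, l i • a i + nonbasicMatrix a e *ᵥ (fun k => l (e k)) = 0 := by
    rw [← sum_smul_eq_sum_add_mulVec_int a e]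
    exact hl
  refine (Submodule.Quotient.eq _).mpr ⟨-fun k => l (e k), ?_⟩
  rw [toLin'_apply, mulVec_neg, ← Finset.sum_sub_distrib, neg_eq_of_add_eq_zero_left hl']
  exact Finset.sum_congr rfl fun i hi => by rw [hI i hi, add_smul, add_sub_cancel_left]

theorem exists_paramPoint_eq_add_of_residueClass_eq (hM : (nonbasicMatrix a e).det ≠ 0)
    {x x' : Fin N → ℤ} (hxx' : residueClass a e x = residueClass a e x') :
    ∃ l ∈ latticeL a, paramPoint a e α x = paramPoint a e α x' + fun j => (l j : ℂ) := by
  obtain ⟨y, hy⟩ := (Submodule.Quotient.eq _).mp hxx'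
  rw [toLin'_apply] at hy
  set l : Fin N → ℤ := fun j => if h : j ∈ I then x j - x' j else -y (e.symm ⟨j, h⟩)
  have hlI : ∀ i ∈ I, l i = x i - x' i := fun i hi => dif_pos hi
  have hle : (fun k => l (e k)) = -y := funext fun k => by simp [l, (e k).2]
  refine ⟨l, ?_, eq_of_eqOn_of_comp_eq e (fun i hi => ?_) ?_⟩
  · have hlΦ : ∑ i ∈ I, l i • a i = ∑ i ∈ I, x i • a i - ∑ i ∈ I, x' i • a i := by
      rw [← Finset.sum_sub_distrib]
      exact Finset.sum_congr rfl fun i hi => by rw [hlI i hi, sub_smul]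
    change ∑ j, l j • a j = 0
    rw [sum_smul_eq_sum_add_mulVec_int a e, hle, mulVec_neg, hy, hlΦ, add_neg_cancel]
  · simp [paramPoint_of_mem hi, hlI i hi]
  · have hΦ : (fun k => ((∑ i ∈ I, x i • a i) k : ℂ)) =
        (fun k => ((∑ i ∈ I, x' i • a i) k : ℂ)) +
          (nonbasicMatrix a e).map (Int.cast : ℤ → ℂ) *ᵥ fun k => (y k : ℂ) := by
      rw [← map_intCast_mulVec, hy]
      funext k
      simp
    change _ = (fun k => paramPoint a e α x' (e k)) + fun k => (l (e k) : ℂ)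
    rw [paramPoint_comp, paramPoint_comp, hΦ, sub_add_eq_sub_sub, mulVec_sub, mulVec_mulVec,
      nonsing_inv_mul _ (isUnit_det_map_intCast hM), one_mulVec, sub_eq_add_neg]
    congr 1
    funext k
    simp [congrFun hle k]

theorem exists_paramPoint_eq_add_iff (hM : (nonbasicMatrix a e).det ≠ 0) (x x' : Fin N → ℤ) :
    (∃ l ∈ latticeL a, paramPoint a e α x = paramPoint a e α x' + fun j => (l j : ℂ)) ↔
      residueClass a e x = residueClass a e x' :=
  ⟨fun ⟨_, hl, hxl⟩ => residueClass_eq_of_paramPoint_eq_add hl hxl,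
    exists_paramPoint_eq_add_of_residueClass_eq hM⟩

end NonbasicCoordinates

theorem stmt_3_general (r N : ℕ)
    (a : Fin N → Fin r → ℤ)
    (hspan : Submodule.span ℤ (Set.range a) = ⊤)
    (I : Finset (Fin N))
    (hind : LinearIndependent ℝ (fun i : {i : Fin N // i ∉ I} => fun k => (a i.1 k : ℝ)))
    (e : Fin r ≃ {i : Fin N // i ∉ I}) (α : Fin r → ℂ) :
    (paramSet a I α).Nonempty ∧
      ∃ S : Finset (Fin N → ℂ), ↑S ⊆ paramSet a I α ∧
        S.card = (Matrix.det (Matrix.of fun k j : Fin r => a (e j).1 k)).natAbs ∧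
        ∀ γ ∈ paramSet a I α, ∃! γ₀, γ₀ ∈ S ∧
          ∃ l ∈ latticeL a, γ = γ₀ + fun j => ((l j : ℤ) : ℂ) := by
  have hM := nonbasicMatrix_det_ne_zero a e hind
  have hrange := range_paramPoint (α := α) hM
  have hcard := (nonbasicMatrix a e).natCard_quotient_range_toLin' hM
  have : Finite ((Fin r → ℤ) ⧸ LinearMap.range (nonbasicMatrix a e).toLin') :=
    Nat.finite_of_card_ne_zero (by simpa [hcard] using hM)
  obtain ⟨S, hSG, hScard, hS⟩ := (residueClass_surjective (e := e) hspan).exists_finset_transversal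
    (fun γ γ₀ => ∃ l ∈ latticeL a, γ = γ₀ + fun j => (l j : ℂ)) (exists_paramPoint_eq_add_iff hM)
  refine ⟨hrange ▸ Set.range_nonempty _, S, hrange ▸ hSG, hScard.trans hcard, ?_⟩
  rintro γ hγ
  obtain ⟨x, rfl⟩ := hrange.symm ▸ hγ
  exact hS x

/-- `G` is nonempty, and the number of its classes modulo translation by `L` is `|det M|`. -/
theorem stmt_3 (r N : ℕ) (hr : 1 ≤ r) (hrN : r < N)
    (a : Fin N → Fin r → ℤ)
    (hspan : Submodule.span ℤ (Set.range a) = ⊤)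
    (h : (Fin r → ℤ) →ₗ[ℤ] ℤ) (hh : ∀ j, h (a j) = 1)
    (I : Finset (Fin N)) (hI : I.card = N - r)
    (hind : LinearIndependent ℝ (fun i : {i : Fin N // i ∉ I} => fun k => (a i.1 k : ℝ)))
    (e : Fin r ≃ {i : Fin N // i ∉ I}) (α : Fin r → ℂ) :
    (paramSet a I α).Nonempty ∧
      ∃ S : Finset (Fin N → ℂ), ↑S ⊆ paramSet a I α ∧
        S.card = (Matrix.det (Matrix.of fun k j : Fin r => a (e j).1 k)).natAbs ∧
        ∀ γ ∈ paramSet a I α, ∃! γ₀, γ₀ ∈ S ∧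
          ∃ l ∈ latticeL a, γ = γ₀ + fun j => ((l j : ℤ) : ℂ) :=
  stmt_3_general r N a hspan I hind e α
end

section
/- Let I ⊆ {1, …, N} with |I| = N − r be such that the vectors a_i for i ∉ I are linearly independent over ℝ. Let γ ∈ ℂ^N with γ_i ∈ ℤ for all i ∈ I, and let ρ ∈ ℝ^N satisfy ∑_{j=1}^N ρ_j l_j > 0 for every nonzero l ∈ L with l_i ≥ 0 for all i ∈ I. Then there exists t₀ > 0 such that for every real t with 0 < t < t₀, the family indexed by l ∈ L with terms ∏_{j=1}^N t^{ρ_j l_j} · |Γ(l_j + γ_j + 1)⁻¹| is summable, where Γ denotes the complex Gamma function with the convention that Γ(z)⁻¹ = 0 when z is a pole of Γ (i.e. z ∈ {0, −1, −2, …}). -/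
/-!
Since the `a j` with `j ∉ I` form a basis of `ℚ^r`, a relation `l ∈ L` is determined by its
coordinates `l i`, `i ∈ I`: there are `D > 0` and `u i ∈ L` with `u i = D` at `i` and `0` at the
other points of `I`, and then `D • l = ∑_{i ∈ I} l i • u i`. Hence `∑ ρ_j l_j = ∑_{i ∈ I} μ_i l_i`
with `μ_i = ρ·u_i / D > 0` by the hypothesis on `ρ`, and `∑ |l_j| ≤ ∑_{i ∈ I} e_i |l_i|` with
`e_i = ∑_j |u_i j|`.

The recursion `1/Γ(s) = s/Γ(s+1)` gives `‖1/Γ(n + w)‖ ≤ C^(|n|+1) (-n)₊! / n₊!`. Since `h` is `1`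
on every `a j`, `∑ l_j = 0`, so the positive and negative parts of `l` have the same sum and the
factorials cancel up to a multinomial coefficient: `∏_j ‖1/Γ(l_j + γ_j + 1)‖ ≤ A B^(∑ |l_j|)`.
For `i ∈ I`, `γ_i ∈ ℤ` and the poles of `Γ` make the term vanish unless `l_i ≥ -γ_i`, so for
`0 < t ≤ 1` the series is dominated by a multiple of `∏_{i ∈ I} (t^μ_i B^e_i)^|l_i|`, a product of
geometric series that converge once `t` is small.
-/

open scoped BigOperators

open Finset Nat

theorem summable_pi_prod {κ β : Type*} [Fintype κ] {f : κ → β → ℝ} (hf0 : ∀ i b, 0 ≤ f i b)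
    (hf : ∀ i, Summable (f i)) : Summable fun x : κ → β => ∏ i, f i (x i) := by
  classical
  refine summable_of_sum_le (c := ∏ i, ∑' b, f i b)
    (fun x => prod_nonneg fun i _ => hf0 i (x i)) fun s => ?_
  calc ∑ x ∈ s, ∏ i, f i (x i)
      ≤ ∑ x ∈ Fintype.piFinset fun i => s.image (· i), ∏ i, f i (x i) :=
        sum_le_sum_of_subset_of_nonneg
          (fun x hx => Fintype.mem_piFinset.2 fun i => mem_image_of_mem _ hx)
          (fun x _ _ => prod_nonneg fun i _ => hf0 i (x i))
    _ = ∏ i, ∑ b ∈ s.image (· i), f i b := (prod_univ_sum _ _).symm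
    _ ≤ ∏ i, ∑' b, f i b :=
        prod_le_prod (fun i _ => sum_nonneg fun b _ => hf0 i b)
          fun i _ => (hf i).sum_le_tsum _ fun b _ => hf0 i b

theorem summable_pow_natAbs {q : ℝ} (hq0 : 0 ≤ q) (hq1 : q < 1) :
    Summable fun z : ℤ => q ^ z.natAbs := by
  have h := summable_geometric_of_lt_one hq0 hq1
  exact .of_nat_of_neg (by simpa using h) (by simpa using h)

theorem Nat.multinomial_univ_le_card_pow {ι : Type*} [Fintype ι] (f : ι → ℕ) :
    multinomial univ f ≤ Fintype.card ι ^ ∑ i, f i := by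
  classical
  have h := sum_pow_eq_sum_piAntidiag (univ : Finset ι) (fun _ => (1 : ℕ)) (∑ i, f i)
  simp only [sum_const, smul_eq_mul, mul_one, one_pow, prod_const_one, Nat.cast_id] at h
  rw [← Finset.card_univ, h]
  exact single_le_sum (f := fun k => multinomial univ k) (fun _ _ => Nat.zero_le _)
    (mem_piAntidiag.2 ⟨rfl, fun i _ => mem_univ i⟩)

theorem prod_factorial_toNat_neg_le {ι : Type*} [Fintype ι] (l : ι → ℤ) (hl : ∑ i, l i = 0) :
    ∏ i, (-l i).toNat ! ≤ (Fintype.card ι ^ ∑ i, (l i).toNat) * ∏ i, (l i).toNat ! := by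
  have hbalance : ∑ i, (-l i).toNat = ∑ i, (l i).toNat := by
    zify
    have : ∀ i, (((-l i).toNat : ℕ) : ℤ) = ((l i).toNat : ℤ) - l i := fun i => by omega
    simp only [this, sum_sub_distrib, hl, sub_zero]
  calc ∏ i, (-l i).toNat ! ≤ (∑ i, (-l i).toNat)! :=
        Nat.le_of_dvd (factorial_pos _) (prod_factorial_dvd_factorial_sum _ _)
    _ = multinomial univ (fun i => (l i).toNat) * ∏ i, (l i).toNat ! := by
        rw [hbalance, ← multinomial_spec, mul_comm]
    _ ≤ (Fintype.card ι ^ ∑ i, (l i).toNat) * ∏ i, (l i).toNat ! :=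
        Nat.mul_le_mul_right _ (multinomial_univ_le_card_pow fun i => (l i).toNat)

theorem exists_le_pow_of_le_mul {f : ℕ → ℝ} (hf : ∀ n, 0 ≤ f n) {s : ℕ} {q : ℝ}
    (hq : ∀ n ≥ s, f (n + 1) ≤ q * f n) : ∃ C, 1 ≤ C ∧ ∀ n, f n ≤ C ^ (n + 1) := by
  set C := max q (1 + ∑ k ∈ range (s + 1), f k)
  have hC1 : 1 ≤ C :=
    (le_add_of_nonneg_right (sum_nonneg fun k _ => hf k)).trans (le_max_right _ _)
  have hinit : ∀ n ≤ s, f n ≤ C := fun n hn =>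
    calc f n ≤ ∑ k ∈ range (s + 1), f k :=
          single_le_sum (fun k _ => hf k) (mem_range.2 (Nat.lt_succ_of_le hn))
      _ ≤ C := by linarith [le_max_right q (1 + ∑ k ∈ range (s + 1), f k)]
  refine ⟨C, hC1, fun n => ?_⟩
  rcases le_total n s with hn | hn
  · exact (hinit n hn).trans (le_self_pow₀ hC1 n.succ_ne_zero)
  induction n, hn using Nat.le_induction with
  | base => exact (hinit s le_rfl).trans (le_self_pow₀ hC1 s.succ_ne_zero)
  | succ n hsn ih =>
    calc f (n + 1) ≤ q * f n := hq n hsn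
      _ ≤ C * C ^ (n + 1) := mul_le_mul (le_max_left _ _) ih (hf n) (by positivity)
      _ = C ^ (n + 1 + 1) := (pow_succ' C _).symm

namespace Complex

theorem inv_Gamma_eq_mul_inv_Gamma_add_one (s : ℂ) : (Gamma s)⁻¹ = s * (Gamma (s + 1))⁻¹ := by
  rcases eq_or_ne s 0 with rfl | hs
  · simp [Gamma_zero]
  · rw [Gamma_add_one s hs, mul_inv, ← mul_assoc, mul_inv_cancel₀ hs, one_mul]

theorem norm_inv_Gamma_sub_nat_le (w : ℂ) (m : ℕ) :
    ‖(Gamma (w - m))⁻¹‖ ≤ (‖w‖ + 1) ^ m * m ! * ‖(Gamma w)⁻¹‖ := by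
  induction m with
  | zero => simp
  | succ m ih =>
    have hnorm : ‖w - (m + 1 : ℕ)‖ ≤ (‖w‖ + 1) * (m + 1) := by
      calc ‖w - (m + 1 : ℕ)‖ ≤ ‖w‖ + (m + 1) := by
            have := norm_sub_le w ((m + 1 : ℕ) : ℂ)
            rw [norm_natCast] at this
            exact_mod_cast this
        _ ≤ (‖w‖ + 1) * (m + 1) := by nlinarith [norm_nonneg w, (m.cast_nonneg : (0 : ℝ) ≤ m)]
    rw [inv_Gamma_eq_mul_inv_Gamma_add_one, norm_mul,
      show w - (m + 1 : ℕ) + 1 = w - m by push_cast; ring]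
    calc ‖w - (m + 1 : ℕ)‖ * ‖(Gamma (w - m))⁻¹‖
        ≤ ((‖w‖ + 1) * (m + 1)) * ((‖w‖ + 1) ^ m * m ! * ‖(Gamma w)⁻¹‖) := by gcongr
      _ = (‖w‖ + 1) ^ (m + 1) * (m + 1)! * ‖(Gamma w)⁻¹‖ := by
        push_cast [factorial_succ]; ring

theorem exists_norm_inv_Gamma_add_nat_mul_factorial_le (w : ℂ) :
    ∃ C, 1 ≤ C ∧ ∀ n : ℕ, ‖(Gamma (w + n))⁻¹‖ * n ! ≤ C ^ (n + 1) := by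
  refine exists_le_pow_of_le_mul (fun n => by positivity) (s := ⌈2 * ‖w‖⌉₊ + 1) (q := 2)
    fun n hn => ?_
  have hlarge : (n + 1 : ℝ) ≤ 2 * ‖w + n‖ := by
    have h1 : 2 * ‖w‖ + 1 ≤ (n : ℝ) := by
      have := Nat.le_ceil (2 * ‖w‖)
      have : ((⌈2 * ‖w‖⌉₊ + 1 : ℕ) : ℝ) ≤ n := by exact_mod_cast hn
      push_cast at this; linarith
    have h2 : (n : ℝ) - ‖w‖ ≤ ‖w + n‖ := by
      have := norm_sub_norm_le (n : ℂ) (-w)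
      rwa [norm_neg, sub_neg_eq_add, norm_natCast, add_comm] at this
    linarith
  rw [inv_Gamma_eq_mul_inv_Gamma_add_one (w + n), norm_mul, Nat.cast_succ, ← add_assoc]
  calc ‖(Gamma (w + n + 1))⁻¹‖ * (n + 1)! = ‖(Gamma (w + n + 1))⁻¹‖ * n ! * (n + 1) := by
        push_cast [factorial_succ]; ring
    _ ≤ ‖(Gamma (w + n + 1))⁻¹‖ * n ! * (2 * ‖w + n‖) := by gcongr
    _ = 2 * (‖w + n‖ * ‖(Gamma (w + n + 1))⁻¹‖ * n !) := by ring

theorem exists_norm_inv_Gamma_intCast_add_mul_factorial_le (w : ℂ) :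
    ∃ C, 1 ≤ C ∧ ∀ n : ℤ,
      ‖(Gamma (n + w))⁻¹‖ * n.toNat ! ≤ C ^ (n.natAbs + 1) * (-n).toNat ! := by
  obtain ⟨C, hC1, hC⟩ := exists_norm_inv_Gamma_add_nat_mul_factorial_le w
  set C' := max C (max (‖w‖ + 1) ‖(Gamma w)⁻¹‖)
  have hC'1 : 1 ≤ C' := le_max_of_le_left hC1
  refine ⟨C', hC'1, fun n => ?_⟩
  rcases n with m | m
  · simp only [Int.ofNat_eq_natCast, Int.toNat_natCast, Int.natAbs_natCast,
      Int.toNat_neg_natCast, factorial_zero, cast_one, mul_one]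
    rw [Int.cast_natCast, add_comm]
    exact (hC m).trans (pow_le_pow_left₀ (by positivity) (le_max_left _ _) _)
  · have hm : ((Int.negSucc m : ℤ) : ℂ) + w = w - (m + 1 : ℕ) := by push_cast; ring
    simp only [Int.toNat_negSucc, factorial_zero, cast_one, mul_one, Int.natAbs_negSucc,
      Int.neg_negSucc, Int.toNat_natCast, hm]
    calc ‖(Gamma (w - (m + 1 : ℕ)))⁻¹‖
        ≤ (‖w‖ + 1) ^ (m + 1) * (m + 1)! * ‖(Gamma w)⁻¹‖ := norm_inv_Gamma_sub_nat_le w (m + 1)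
      _ ≤ C' ^ (m + 1) * (m + 1)! * C' := by
        gcongr
        · exact le_max_of_le_right (le_max_left _ _)
        · exact le_max_of_le_right (le_max_right _ _)
      _ = C' ^ (m + 1 + 1) * (m + 1)! := by ring

theorem Gamma_intCast_of_nonpos {n : ℤ} (hn : n ≤ 0) : Gamma n = 0 :=
  (Gamma_eq_zero_iff _).2 ⟨n.natAbs, by
    rw [← Int.cast_natCast, show (n.natAbs : ℤ) = -n by omega, Int.cast_neg, neg_neg]⟩

end Complex

open Complex in
theorem exists_prod_norm_inv_Gamma_le {ι : Type*} [Fintype ι] (w : ι → ℂ) :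
    ∃ A B : ℝ, 1 ≤ B ∧ ∀ l : ι → ℤ, ∑ i, l i = 0 →
      ∏ i, ‖(Gamma (l i + w i))⁻¹‖ ≤ A * B ^ ∑ i, (l i).natAbs := by
  choose C hC1 hC using fun i => exists_norm_inv_Gamma_intCast_add_mul_factorial_le (w i)
  set C₀ := 1 + ∑ i, C i
  have hCC₀ : ∀ i, C i ≤ C₀ := fun i => by
    have := single_le_sum (fun j _ => (zero_le_one.trans (hC1 j))) (mem_univ i)
    linarith
  have hC₀ : 1 ≤ C₀ := le_add_of_nonneg_right (sum_nonneg fun i _ => zero_le_one.trans (hC1 i))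
  set n := Fintype.card ι
  have hn : (1 : ℝ) ≤ n + 1 := by linarith [n.cast_nonneg (α := ℝ)]
  refine ⟨C₀ ^ n, C₀ * (n + 1), one_le_mul_of_one_le_of_one_le hC₀ hn, fun l hl => ?_⟩
  set k := ∑ i, (l i).natAbs
  have hneg : ∏ i, (-l i).toNat ! ≤ (n + 1) ^ k * ∏ i, (l i).toNat ! :=
    calc ∏ i, (-l i).toNat ! ≤ n ^ (∑ i, (l i).toNat) * ∏ i, (l i).toNat ! :=
          prod_factorial_toNat_neg_le l hl
      _ ≤ (n + 1) ^ k * ∏ i, (l i).toNat ! := by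
          gcongr ?_ * _
          exact (Nat.pow_le_pow_left n.le_succ _).trans
            (Nat.pow_le_pow_right n.succ_pos (sum_le_sum fun i _ => by omega))
  rw [← mul_le_mul_iff_of_pos_right (show 0 < ∏ i, ((l i).toNat ! : ℝ) by positivity),
    ← prod_mul_distrib]
  calc ∏ i, (‖(Gamma (l i + w i))⁻¹‖ * (l i).toNat !)
      ≤ ∏ i, (C i ^ ((l i).natAbs + 1) * (-l i).toNat !) :=
        prod_le_prod (fun i _ => by positivity) fun i _ => hC i (l i)
    _ ≤ ∏ i, (C₀ ^ ((l i).natAbs + 1) * (-l i).toNat !) :=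
        prod_le_prod (fun i _ => by have := hC1 i; positivity)
          fun i _ => by gcongr; exacts [(hC1 i).trans' zero_le_one, hCC₀ i]
    _ = C₀ ^ (k + n) * ∏ i, ((-l i).toNat ! : ℝ) := by
        rw [prod_mul_distrib, prod_pow_eq_pow_sum, sum_add_distrib, sum_const, Finset.card_univ,
          smul_eq_mul, mul_one]
    _ ≤ C₀ ^ (k + n) * ((n + 1 : ℝ) ^ k * ∏ i, ((l i).toNat ! : ℝ)) := by
        gcongr
        exact_mod_cast hneg
    _ = C₀ ^ n * (C₀ * (n + 1)) ^ k * ∏ i, ((l i).toNat ! : ℝ) := by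
        rw [mul_pow, pow_add]; ring

theorem Real.rpow_mul_intCast_le_of_neg_le {t μ : ℝ} {x c : ℤ} (ht0 : 0 < t) (ht1 : t ≤ 1) (hμ : 0 ≤ μ)
    (hx : -c ≤ x) : t ^ (μ * x) ≤ t ^ (-(2 * μ * |c|)) * (t ^ μ) ^ x.natAbs := by
  rw [← Real.rpow_natCast, ← Real.rpow_mul ht0.le, ← Real.rpow_add ht0, Nat.cast_natAbs]
  push_cast
  refine Real.rpow_le_rpow_of_exponent_ge ht0 ht1 ?_
  have hxR : (-c : ℝ) ≤ x := by exact_mod_cast hx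
  have : |(x : ℝ)| - x ≤ 2 * |(c : ℝ)| := by
    cases abs_cases (x : ℝ) <;> cases abs_cases (c : ℝ) <;> linarith
  nlinarith [mul_le_mul_of_nonneg_left this hμ]

open Complex in
theorem prod_rpow_mul_norm_inv_Gamma_le {ι : Type*} [Fintype ι] {I : Finset ι} {ρ μ : ι → ℝ}
    {e : ι → ℕ} {γ : ι → ℂ} {c : ι → ℤ} {A B t : ℝ} {l : ι → ℤ}
    (hc : ∀ i ∈ I, γ i = c i) (hμ : ∀ i ∈ I, 0 ≤ μ i) (hB : 1 ≤ B) (ht0 : 0 < t) (ht1 : t ≤ 1)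
    (hρ : ∑ j, ρ j * l j = ∑ i ∈ I, μ i * l i)
    (he : ∑ j, (l j).natAbs ≤ ∑ i ∈ I, e i * (l i).natAbs)
    (hΓ : ∏ j, ‖(Gamma (l j + (γ j + 1)))⁻¹‖ ≤ A * B ^ ∑ j, (l j).natAbs) :
    ∏ j, t ^ (ρ j * l j) * ‖(Gamma (l j + γ j + 1))⁻¹‖ ≤
      A * ∏ i ∈ I, (t ^ (-(2 * μ i * |c i|)) * (t ^ μ i * B ^ e i) ^ (l i).natAbs) := by
  simp_rw [add_assoc] at hΓ ⊢
  rw [prod_mul_distrib, ← Real.rpow_sum_of_pos ht0, hρ]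
  have hA : 0 ≤ A := nonneg_of_mul_nonneg_left
    ((prod_nonneg fun j _ => norm_nonneg _).trans hΓ) (by positivity)
  by_cases hG : ∏ j, ‖(Gamma (l j + (γ j + 1)))⁻¹‖ = 0
  · rw [hG, mul_zero]
    exact mul_nonneg hA (prod_nonneg fun i _ => by positivity)
  have hlc : ∀ i ∈ I, -c i ≤ l i := fun i hi => by
    by_contra! hlt
    refine hG (prod_eq_zero (mem_univ i) ?_)
    rw [hc i hi, show (l i : ℂ) + (c i + 1) = ((l i + c i + 1 : ℤ) : ℂ) by push_cast; ring,
      Gamma_intCast_of_nonpos (by omega), inv_zero, norm_zero]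
  have ht : t ^ ∑ i ∈ I, μ i * l i ≤
      ∏ i ∈ I, (t ^ (-(2 * μ i * |c i|)) * (t ^ μ i) ^ (l i).natAbs) := by
    rw [Real.rpow_sum_of_pos ht0]
    exact prod_le_prod (fun i _ => by positivity) fun i hi =>
      Real.rpow_mul_intCast_le_of_neg_le ht0 ht1 (hμ i hi) (hlc i hi)
  have hBe : B ^ ∑ j, (l j).natAbs ≤ ∏ i ∈ I, (B ^ e i) ^ (l i).natAbs := by
    simp_rw [← pow_mul, prod_pow_eq_pow_sum]
    exact pow_le_pow_right₀ hB he
  calc (t ^ ∑ i ∈ I, μ i * l i) * ∏ j, ‖(Gamma (l j + (γ j + 1)))⁻¹‖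
      ≤ (∏ i ∈ I, (t ^ (-(2 * μ i * |c i|)) * (t ^ μ i) ^ (l i).natAbs)) *
          (A * ∏ i ∈ I, (B ^ e i) ^ (l i).natAbs) := by
        gcongr
        exact hΓ.trans (mul_le_mul_of_nonneg_left hBe hA)
    _ = A * ∏ i ∈ I, (t ^ (-(2 * μ i * |c i|)) * (t ^ μ i * B ^ e i) ^ (l i).natAbs) := by
        rw [mul_left_comm, ← prod_mul_distrib]
        simp_rw [mul_pow, mul_assoc]

open Filter Topology Complex in
theorem eventually_summable_prod_rpow_mul_norm_inv_Gamma {ι : Type*} [Fintype ι]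
    {L : Set (ι → ℤ)} {I : Finset ι} {ρ μ : ι → ℝ} {e : ι → ℕ} {γ : ι → ℂ}
    (hγ : ∀ i ∈ I, ∃ z : ℤ, γ i = z) (hμ : ∀ i ∈ I, 0 < μ i)
    (hinj : Set.InjOn (fun (l : ι → ℤ) (i : I) => l i) L)
    (hsum : ∀ l ∈ L, ∑ j, l j = 0)
    (hρ : ∀ l ∈ L, ∑ j, ρ j * l j = ∑ i ∈ I, μ i * l i)
    (he : ∀ l ∈ L, ∑ j, (l j).natAbs ≤ ∑ i ∈ I, e i * (l i).natAbs) :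
    ∀ᶠ t in 𝓝[>] 0, Summable fun l : L =>
      ∏ j, t ^ (ρ j * ((l : ι → ℤ) j : ℝ)) * ‖(Gamma (((l : ι → ℤ) j : ℂ) + γ j + 1))⁻¹‖ := by
  choose! c hc using hγ
  obtain ⟨A, B, hB, hAB⟩ := exists_prod_norm_inv_Gamma_le fun j => γ j + 1
  have hq : ∀ i ∈ I, ∀ᶠ t in 𝓝[>] (0 : ℝ), t ^ μ i * B ^ e i < 1 := fun i hi => by
    have hlim : Tendsto (fun t : ℝ => t ^ μ i * B ^ e i) (𝓝[>] 0) (𝓝 0) := by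
      simpa [Real.zero_rpow (hμ i hi).ne'] using
        ((Real.continuousAt_rpow_const 0 (μ i) (Or.inr (hμ i hi).le)).tendsto.mono_left
          nhdsWithin_le_nhds).mul_const (B ^ e i)
    exact hlim.eventually (gt_mem_nhds zero_lt_one)
  filter_upwards [self_mem_nhdsWithin, Ioo_mem_nhdsGT zero_lt_one,
    (eventually_all_finset I).2 hq] with t (ht0 : 0 < t) ht1 htq
  have hmajorant : Summable fun z : I → ℤ =>
      A * ∏ i : I, (t ^ (-(2 * μ i * |c i|)) * (t ^ μ i * B ^ e i) ^ (z i).natAbs) :=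
    (summable_pi_prod (fun (i : I) z => by positivity) fun (i : I) =>
      (summable_pow_natAbs (by positivity) (htq i i.2)).mul_left _).mul_left A
  refine Summable.of_nonneg_of_le (fun l => prod_nonneg fun j _ => by positivity)
    (fun l => ?_) (hmajorant.comp_injective hinj.injective)
  rw [Function.comp_apply, Set.domRestrict_apply, prod_coe_sort I
    fun i => t ^ (-(2 * μ i * |c i|)) * (t ^ μ i * B ^ e i) ^ ((l : ι → ℤ) i).natAbs]
  exact prod_rpow_mul_norm_inv_Gamma_le hc (fun i hi => (hμ i hi).le) hB ht0 ht1.2.le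
    (hρ l l.2) (he l l.2) (hAB l (hsum l l.2))

theorem eq_zero_of_sum_smul_eq_zero_of_linearIndepOn {K V ι : Type*} [Ring K] [AddCommGroup V]
    [Module K V] [Fintype ι] {b : ι → V} {I : Finset ι} (hb : LinearIndepOn K b (↑I)ᶜ)
    {x : ι → K} (hx : ∑ k, x k • b k = 0) (hxI : ∀ i ∈ I, x i = 0) : x = 0 := by
  classical
  rw [← coe_compl] at hb
  have hsum : ∑ k ∈ Iᶜ, x k • b k = 0 := by
    rw [← hx, ← sum_compl_add_sum I, sum_eq_zero (s := I) fun i hi => by simp [hxI i hi],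
      add_zero]
  funext k
  by_cases hk : k ∈ I
  · exact hxI k hk
  · exact linearIndepOn_finset_iff.1 hb x hsum k (mem_compl.2 hk)

theorem sum_natAbs_le_of_smul_eq_sum {ι : Type*} [Fintype ι] {I : Finset ι} {D : ℤ} (hD : 0 < D)
    {u : ι → ι → ℤ} {l : ι → ℤ} (hl : D • l = ∑ i ∈ I, l i • u i) :
    ∑ j, (l j).natAbs ≤ ∑ i ∈ I, (∑ j, (u i j).natAbs) * (l i).natAbs := by
  have hj : ∀ j, (l j).natAbs ≤ ∑ i ∈ I, (u i j).natAbs * (l i).natAbs := fun j =>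
    calc (l j).natAbs ≤ (D * l j).natAbs := by
          rw [Int.natAbs_mul]; exact Nat.le_mul_of_pos_left _ (Int.natAbs_pos.2 hD.ne')
      _ = (∑ i ∈ I, l i * u i j).natAbs := by simpa using congrArg (fun v => (v j).natAbs) hl
      _ ≤ ∑ i ∈ I, (l i * u i j).natAbs := Int.natAbs_sum_le _ _
      _ = ∑ i ∈ I, (u i j).natAbs * (l i).natAbs := by simp [Int.natAbs_mul, mul_comm]
  calc ∑ j, (l j).natAbs ≤ ∑ j, ∑ i ∈ I, (u i j).natAbs * (l i).natAbs := sum_le_sum fun j _ => hj j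
    _ = ∑ i ∈ I, (∑ j, (u i j).natAbs) * (l i).natAbs := by rw [sum_comm]; simp [sum_mul]

theorem sum_mul_eq_sum_mul_of_smul_eq_sum {ι : Type*} [Fintype ι] {I : Finset ι} {D : ℤ}
    (hD : D ≠ 0) {u : ι → ι → ℤ} {l : ι → ℤ} (hl : D • l = ∑ i ∈ I, l i • u i) (ρ : ι → ℝ) :
    ∑ j, ρ j * l j = ∑ i ∈ I, (∑ j, ρ j * u i j) / D * l i := by
  have hj : ∀ j, (D : ℝ) * l j = ∑ i ∈ I, (l i : ℝ) * u i j := fun j => by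
    exact_mod_cast (by simpa using congrFun hl j)
  have hDR : (D : ℝ) ≠ 0 := by exact_mod_cast hD
  apply mul_left_cancel₀ hDR
  calc (D : ℝ) * ∑ j, ρ j * l j = ∑ j, ρ j * ∑ i ∈ I, (l i : ℝ) * u i j := by
        rw [mul_sum]; exact sum_congr rfl fun j _ => by rw [← hj]; ring
    _ = D * ∑ i ∈ I, (∑ j, ρ j * u i j) / D * l i := by
        simp only [mul_sum, sum_div, sum_mul]
        rw [sum_comm]
        exact sum_congr rfl fun i _ => sum_congr rfl fun j _ => by field_simp

section latticeL

variable {r N : ℕ} {a : Fin N → Fin r → ℤ} {I : Finset (Fin N)}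

theorem mem_latticeL_iff {l : Fin N → ℤ} :
    l ∈ latticeL a ↔ l ∈ LinearMap.ker (Fintype.linearCombination ℤ a) := by
  simp [latticeL, Fintype.linearCombination_apply]

theorem sum_eq_zero_of_mem_latticeL {h : (Fin r → ℤ) →ₗ[ℤ] ℤ} (hh : ∀ j, h (a j) = 1)
    {l : Fin N → ℤ} (hl : l ∈ latticeL a) : ∑ j, l j = 0 := by
  have := congrArg h (show ∑ j, l j • a j = 0 from hl)
  simpa only [map_sum, map_smul, hh, smul_eq_mul, mul_one, map_zero] using this

theorem eq_zero_of_mem_latticeL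
    (hind : LinearIndependent ℝ (fun i : {i : Fin N // i ∉ I} => fun k => (a i.1 k : ℝ)))
    {x : Fin N → ℤ} (hx : x ∈ latticeL a) (hxI : ∀ i ∈ I, x i = 0) : x = 0 := by
  have hxR : ∑ k, (x k : ℝ) • (fun m => (a k m : ℝ)) = 0 := by
    funext m
    have := congrFun (show ∑ j, x j • a j = 0 from hx) m
    simp only [Finset.sum_apply, Pi.smul_apply, smul_eq_mul, Pi.zero_apply] at this ⊢
    exact_mod_cast this
  have := eq_zero_of_sum_smul_eq_zero_of_linearIndepOn
    (show LinearIndepOn ℝ (fun i k => (a i k : ℝ)) (↑I)ᶜ from hind) hxR (by simpa using hxI)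
  funext k
  simpa using congrFun this k

theorem injOn_restrict_latticeL
    (hind : LinearIndependent ℝ (fun i : {i : Fin N // i ∉ I} => fun k => (a i.1 k : ℝ))) :
    Set.InjOn (fun (l : Fin N → ℤ) (i : I) => l i) (latticeL a) := by
  intro l hl l' hl' hll'
  refine sub_eq_zero.1 (eq_zero_of_mem_latticeL hind ?_ fun i hi => ?_)
  · exact mem_latticeL_iff.2 (sub_mem (mem_latticeL_iff.1 hl) (mem_latticeL_iff.1 hl'))
  · simpa [sub_eq_zero] using congrFun hll' ⟨i, hi⟩

theorem exists_mem_latticeL_single_pos (hrN : r < N) (hI : I.card = N - r)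
    (hind : LinearIndependent ℝ (fun i : {i : Fin N // i ∉ I} => fun k => (a i.1 k : ℝ)))
    {i : Fin N} (hi : i ∈ I) :
    ∃ w ∈ latticeL a, 0 < w i ∧ ∀ i' ∈ I, i' ≠ i → w i' = 0 := by
  classical
  set s := insert i Iᶜ
  -- `r + 1` vectors in `ℤ^r` are linearly dependent
  have hdep : ¬LinearIndepOn ℤ a ↑s := fun hs => by
    have := hs.fintype_card_le_finrank
    simp only [coe_sort_coe, Fintype.card_coe] at this
    rw [card_insert_of_notMem (by simpa using hi), card_compl, Fintype.card_fin,
      Module.finrank_fin_fun] at this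
    omega
  obtain ⟨g, hg, k, hks, hgk⟩ := not_linearIndepOn_finset_iff.1 hdep
  set g' : Fin N → ℤ := fun k => if k ∈ s then g k else 0
  have hg' : g' ∈ latticeL a := by
    show ∑ k, g' k • a k = 0
    simpa only [g', ite_smul, zero_smul, sum_ite_mem, univ_inter] using hg
  have hg'I : ∀ i' ∈ I, i' ≠ i → g' i' = 0 := fun i' hi' hne => by simp [g', s, hi', hne]
  have hgi : g i ≠ 0 := fun hgi => by
    have := eq_zero_of_mem_latticeL hind hg' fun i' hi' => by
      rcases eq_or_ne i' i with rfl | hne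
      · simp [g', hgi]
      · exact hg'I i' hi' hne
    exact hgk (by simpa [g', hks] using congrFun this k)
  refine ⟨g i • g', mem_latticeL_iff.2 (Submodule.smul_mem _ _ (mem_latticeL_iff.1 hg')), ?_,
    fun i' hi' hne => by simp [hg'I i' hi' hne]⟩
  simpa [g', s] using mul_self_pos.2 hgi

theorem exists_latticeL_basis (hrN : r < N) (hI : I.card = N - r)
    (hind : LinearIndependent ℝ (fun i : {i : Fin N // i ∉ I} => fun k => (a i.1 k : ℝ))) :
    ∃ D : ℤ, 0 < D ∧ ∃ u : Fin N → Fin N → ℤ,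
      ∀ i ∈ I, u i ∈ latticeL a ∧ ∀ i' ∈ I, u i i' = if i' = i then D else 0 := by
  classical
  choose! w hwL hwpos hw0 using
    fun i (hi : i ∈ I) => exists_mem_latticeL_single_pos hrN hI hind hi
  refine ⟨∏ i ∈ I, w i i, prod_pos hwpos, fun i => ((∏ i ∈ I, w i i) / w i i) • w i,
    fun i hi => ⟨mem_latticeL_iff.2 (Submodule.smul_mem _ _ (mem_latticeL_iff.1 (hwL i hi))),
      fun i' hi' => ?_⟩⟩
  split_ifs with h
  · subst h
    simp [Int.ediv_mul_cancel (dvd_prod_of_mem _ hi)]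
  · simp [hw0 i hi i' hi' h]

theorem smul_eq_sum_of_mem_latticeL
    (hind : LinearIndependent ℝ (fun i : {i : Fin N // i ∉ I} => fun k => (a i.1 k : ℝ)))
    {D : ℤ} {u : Fin N → Fin N → ℤ}
    (hu : ∀ i ∈ I, u i ∈ latticeL a ∧ ∀ i' ∈ I, u i i' = if i' = i then D else 0)
    {l : Fin N → ℤ} (hl : l ∈ latticeL a) : D • l = ∑ i ∈ I, l i • u i := by
  classical
  rw [← sub_eq_zero]
  refine eq_zero_of_mem_latticeL hind (mem_latticeL_iff.2 (sub_mem ?_ ?_)) fun i' hi' => ?_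
  · exact Submodule.smul_mem _ _ (mem_latticeL_iff.1 hl)
  · exact Submodule.sum_mem _ fun i hi => Submodule.smul_mem _ _ (mem_latticeL_iff.1 (hu i hi).1)
  · simp only [Pi.sub_apply, Pi.smul_apply, Finset.sum_apply, smul_eq_mul]
    rw [sum_congr rfl fun i hi => by rw [(hu i hi).2 i' hi'], sub_eq_zero]
    simp [hi', mul_comm]

end latticeL

/-- `Γ(z)⁻¹ = 0` at the poles because Mathlib's `Complex.Gamma` is `0` there. -/
theorem stmt_4_general (r N : ℕ) (hrN : r < N)
    (a : Fin N → Fin r → ℤ)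
    (h : (Fin r → ℤ) →ₗ[ℤ] ℤ) (hh : ∀ j, h (a j) = 1)
    (I : Finset (Fin N)) (hI : I.card = N - r)
    (hind : LinearIndependent ℝ (fun i : {i : Fin N // i ∉ I} => fun k => (a i.1 k : ℝ)))
    (γ : Fin N → ℂ) (hγ : ∀ i ∈ I, ∃ z : ℤ, γ i = (z : ℂ))
    (ρ : Fin N → ℝ)
    (hρ : ∀ l ∈ latticeL a, l ≠ 0 → (∀ i ∈ I, 0 ≤ l i) → 0 < ∑ j, ρ j * (l j : ℝ)) :
    ∃ t₀ : ℝ, 0 < t₀ ∧ ∀ t : ℝ, 0 < t → t < t₀ →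
      Summable (fun l : latticeL a =>
        ∏ j, t ^ (ρ j * ((l : Fin N → ℤ) j : ℝ)) *
          ‖(Complex.Gamma (((l : Fin N → ℤ) j : ℂ) + γ j + 1))⁻¹‖) := by
  obtain ⟨D, hD, u, hu⟩ := exists_latticeL_basis hrN hI hind
  have hrepr := fun l (hl : l ∈ latticeL a) => smul_eq_sum_of_mem_latticeL hind hu hl
  have hμ : ∀ i ∈ I, 0 < (∑ j, ρ j * u i j) / D := fun i hi => by
    refine div_pos (hρ _ (hu i hi).1 (fun h0 => ?_) fun i' hi' => ?_) (by exact_mod_cast hD)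
    · simpa [(hu i hi).2 i hi, hD.ne'] using congrFun h0 i
    · rw [(hu i hi).2 i' hi']
      split_ifs <;> omega
  obtain ⟨t₀, ht₀, hsub⟩ := mem_nhdsGT_iff_exists_Ioo_subset.1 <|
    eventually_summable_prod_rpow_mul_norm_inv_Gamma (e := fun i => ∑ j, (u i j).natAbs) hγ hμ
      (injOn_restrict_latticeL hind) (fun l hl => sum_eq_zero_of_mem_latticeL hh hl)
      (fun l hl => sum_mul_eq_sum_mul_of_smul_eq_sum hD.ne' (hrepr l hl) ρ)
      (fun l hl => sum_natAbs_le_of_smul_eq_sum hD (hrepr l hl))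
  exact ⟨t₀, ht₀, fun t ht0 ht => hsub ⟨ht0, ht⟩⟩

/-- For a convergence direction `ρ`, the series `∑_{l ∈ L} ∏_j t^{ρ_j l_j} |Γ(l_j+γ_j+1)⁻¹|`
is summable for all sufficiently small `t > 0`.  (Mathlib's `Complex.Gamma` vanishes at the
poles `0, -1, -2, …`, and `(0 : ℂ)⁻¹ = 0`, so `Γ(z)⁻¹ = 0` at the poles, as required.) -/
theorem stmt_4 (r N : ℕ) (hr : 1 ≤ r) (hrN : r < N)
    (a : Fin N → Fin r → ℤ)
    (hspan : Submodule.span ℤ (Set.range a) = ⊤)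
    (h : (Fin r → ℤ) →ₗ[ℤ] ℤ) (hh : ∀ j, h (a j) = 1)
    (I : Finset (Fin N)) (hI : I.card = N - r)
    (hind : LinearIndependent ℝ (fun i : {i : Fin N // i ∉ I} => fun k => (a i.1 k : ℝ)))
    (γ : Fin N → ℂ) (hγ : ∀ i ∈ I, ∃ z : ℤ, γ i = (z : ℂ))
    (ρ : Fin N → ℝ)
    (hρ : ∀ l ∈ latticeL a, l ≠ 0 → (∀ i ∈ I, 0 ≤ l i) → 0 < ∑ j, ρ j * (l j : ℝ)) :
    ∃ t₀ : ℝ, 0 < t₀ ∧ ∀ t : ℝ, 0 < t → t < t₀ →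
      Summable (fun l : latticeL a =>
        ∏ j, t ^ (ρ j * ((l : Fin N → ℤ) j : ℝ)) *
          ‖(Complex.Gamma (((l : Fin N → ℤ) j : ℂ) + γ j + 1))⁻¹‖) :=
  stmt_4_general r N hrN a h hh I hI hind γ hγ ρ hρ
end

section
/- Let m : ℝ^r → ℝ be a linear form with m(a_j) ≥ 0 for all j = 1, …, N, and let S = {j : m(a_j) = 0}. Let F be an analytic function on an open set U ⊆ ℂ^N such that ∂F/∂v_j = 0 on U for every j ∉ S, and such that F satisfies the box equation ∏_{j : l_j > 0} (∂/∂v_j)^{l_j} F = ∏_{j : l_j < 0} (∂/∂v_j)^{-l_j} F on U for every l ∈ L whose support {j : l_j ≠ 0} is contained in S. Then F satisfies the box equation ∏_{j : l_j > 0} (∂/∂v_j)^{l_j} F = ∏_{j : l_j < 0} (∂/∂v_j)^{-l_j} F on U for every l ∈ L. -/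
open scoped BigOperators

/-- The partial derivative `∂F/∂v_j`. -/
noncomputable def pder {N : ℕ} (j : Fin N) (F : (Fin N → ℂ) → ℂ) : (Fin N → ℂ) → ℂ :=
  fun v => fderiv ℂ F v (Pi.single j 1)

/-- The mixed partial derivative `∂^u F` of order `u j` in the variable `v_j` for each `j`. -/
noncomputable def mpder {N : ℕ} (u : Fin N → ℕ) (F : (Fin N → ℂ) → ℂ) : (Fin N → ℂ) → ℂ :=
  (List.finRange N).foldr (fun j G => (pder j)^[u j] G) F

section Aux

variable {N : ℕ} {U : Set (Fin N → ℂ)}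

lemma pder_zero_of_zero (hU : IsOpen U) {G : (Fin N → ℂ) → ℂ}
    (hG : ∀ v ∈ U, G v = 0) (j : Fin N) : ∀ v ∈ U, pder j G v = 0 := by
  intro v hv
  have he : G =ᶠ[nhds v] (fun _ => (0 : ℂ)) :=
    Filter.eventuallyEq_of_mem (hU.mem_nhds hv) hG
  simp [pder, he.fderiv_eq]

lemma pder_analytic {F : (Fin N → ℂ) → ℂ} (hF : AnalyticOnNhd ℂ F U) (j : Fin N) :
    AnalyticOnNhd ℂ (pder j F) U := by
  have h2 := (ContinuousLinearMap.apply ℂ ℂ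
      ((Pi.single j 1 : Fin N → ℂ))).comp_analyticOnNhd hF.fderiv
  exact h2

lemma pder_comm (hU : IsOpen U) {G : (Fin N → ℂ) → ℂ}
    (hG : AnalyticOnNhd ℂ G U) (i j : Fin N) :
    ∀ v ∈ U, pder i (pder j G) v = pder j (pder i G) v := by
  intro v hv
  have hd : ∀ w ∈ U, DifferentiableAt ℂ (fderiv ℂ G) w := fun w hw =>
    (hG.fderiv w hw).differentiableAt
  have hsym : IsSymmSndFDerivAt ℂ G v :=
    ((hG v hv).contDiffAt (n := 2)).isSymmSndFDerivAt (by norm_num)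
  have key : ∀ (p q : Fin N), pder p (pder q G) v
      = fderiv ℂ (fderiv ℂ G) v (Pi.single p 1) (Pi.single q 1) := by
    intro p q
    have hc := fderiv_clm_apply (c := fderiv ℂ G)
      (u := fun _ => (Pi.single q 1 : Fin N → ℂ)) (hd v hv) (differentiableAt_const _)
    have : pder p (pder q G) v
        = fderiv ℂ (fun y => fderiv ℂ G y (Pi.single q 1)) v (Pi.single p 1) := rfl
    rw [this, hc]
    simp
  rw [key i j, key j i, hsym.eq]
lemma iterate_analytic {G : (Fin N → ℂ) → ℂ} (hG : AnalyticOnNhd ℂ G U)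
    (i : Fin N) (k : ℕ) : AnalyticOnNhd ℂ ((pder i)^[k] G) U := by
  induction k with
  | zero => simpa using hG
  | succ k ih => rw [Function.iterate_succ_apply']; exact pder_analytic ih i

lemma iterate_zero_of_zero (hU : IsOpen U) {G : (Fin N → ℂ) → ℂ}
    (hG : ∀ v ∈ U, G v = 0) (i : Fin N) (k : ℕ) :
    ∀ v ∈ U, (pder i)^[k] G v = 0 := by
  induction k with
  | zero => simpa using hG
  | succ k ih =>
    intro v hv
    rw [Function.iterate_succ_apply']
    exact pder_zero_of_zero hU ih i v hv

lemma pder_iterate_zero (hU : IsOpen U) {G : (Fin N → ℂ) → ℂ}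
    (hG : AnalyticOnNhd ℂ G U) {j : Fin N} (hz : ∀ v ∈ U, pder j G v = 0)
    (i : Fin N) (k : ℕ) : ∀ v ∈ U, pder j ((pder i)^[k] G) v = 0 := by
  induction k with
  | zero => simpa using hz
  | succ k ih =>
    intro v hv
    rw [Function.iterate_succ_apply']
    rw [pder_comm hU (iterate_analytic hG i k) j i v hv]
    exact pder_zero_of_zero hU ih i v hv

lemma foldr_analytic (u : Fin N → ℕ) (L : List (Fin N)) {G : (Fin N → ℂ) → ℂ}
    (hG : AnalyticOnNhd ℂ G U) :
    AnalyticOnNhd ℂ (L.foldr (fun i H => (pder i)^[u i] H) G) U := by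
  induction L with
  | nil => simpa using hG
  | cons i L ih => exact iterate_analytic ih i (u i)

lemma foldr_zero_of_zero (hU : IsOpen U) (u : Fin N → ℕ) (L : List (Fin N))
    {G : (Fin N → ℂ) → ℂ} (hG : ∀ v ∈ U, G v = 0) :
    ∀ v ∈ U, L.foldr (fun i H => (pder i)^[u i] H) G v = 0 := by
  induction L with
  | nil => simpa using hG
  | cons i L ih => exact iterate_zero_of_zero hU ih i (u i)

lemma foldr_pder_zero (hU : IsOpen U) (u : Fin N → ℕ) (L : List (Fin N))
    {G : (Fin N → ℂ) → ℂ} (hG : AnalyticOnNhd ℂ G U) {j : Fin N}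
    (hz : ∀ v ∈ U, pder j G v = 0) :
    ∀ v ∈ U, pder j (L.foldr (fun i H => (pder i)^[u i] H) G) v = 0 := by
  induction L with
  | nil => simpa using hz
  | cons i L ih => exact pder_iterate_zero hU (foldr_analytic u L hG) ih i (u i)

lemma mpder_eq_zero (hU : IsOpen U) {F : (Fin N → ℂ) → ℂ} (hF : AnalyticOnNhd ℂ F U)
    (u : Fin N → ℕ) (j : Fin N) (hj : u j ≠ 0)
    (hz : ∀ v ∈ U, pder j F v = 0) : ∀ v ∈ U, mpder u F v = 0 := by
  obtain ⟨L1, L2, hL⟩ := List.append_of_mem (List.mem_finRange j)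
  obtain ⟨k, hk⟩ : ∃ k, u j = k + 1 := ⟨u j - 1, (Nat.succ_pred_eq_of_pos (Nat.pos_of_ne_zero hj)).symm⟩
  set f : Fin N → ((Fin N → ℂ) → ℂ) → ((Fin N → ℂ) → ℂ) := fun i H => (pder i)^[u i] H with hf
  have hm : mpder u F = L1.foldr f (f j (L2.foldr f F)) := by
    rw [mpder, hL, List.foldr_append, List.foldr_cons]
  have hG2 : AnalyticOnNhd ℂ (L2.foldr f F) U := foldr_analytic u L2 hF
  have hz2 : ∀ v ∈ U, pder j (L2.foldr f F) v = 0 := foldr_pder_zero hU u L2 hF hz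
  have hz3 : ∀ v ∈ U, f j (L2.foldr f F) v = 0 := by
    intro v hv
    have : f j (L2.foldr f F) = (pder j)^[k] (pder j (L2.foldr f F)) := by
      rw [hf]; simp only []; rw [hk, Function.iterate_succ_apply]
    rw [this]
    exact iterate_zero_of_zero hU hz2 j k v hv
  intro v hv
  rw [hm]
  exact foldr_zero_of_zero hU u L1 hz3 v hv

end Aux

/-- Let `S = {j : m(a_j) = 0}` with `m` nonnegative on all `a_j`.  If an analytic `F` on an
open `U` has `∂F/∂v_j = 0` on `U` for all `j ∉ S` and satisfies the box equations for all
`l ∈ L` supported in `S`, then it satisfies the box equations for all `l ∈ L`. -/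
theorem stmt_11 (r N : ℕ) (hr : 1 ≤ r) (hrN : r < N)
    (a : Fin N → Fin r → ℤ)
    (hspan : Submodule.span ℤ (Set.range a) = ⊤)
    (h : (Fin r → ℤ) →ₗ[ℤ] ℤ) (hh : ∀ j, h (a j) = 1)
    (m : (Fin r → ℝ) →ₗ[ℝ] ℝ) (hm : ∀ j, 0 ≤ m (fun k => (a j k : ℝ)))
    (U : Set (Fin N → ℂ)) (hU : IsOpen U)
    (F : (Fin N → ℂ) → ℂ) (hF : AnalyticOnNhd ℂ F U)
    (hvanish : ∀ j, m (fun k => (a j k : ℝ)) ≠ 0 → ∀ v ∈ U, pder j F v = 0)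
    (hbox : ∀ l ∈ latticeL a, (∀ j, l j ≠ 0 → m (fun k => (a j k : ℝ)) = 0) →
      ∀ v ∈ U, mpder (fun j => (l j).toNat) F v = mpder (fun j => (-(l j)).toNat) F v) :
    ∀ l ∈ latticeL a, ∀ v ∈ U,
      mpder (fun j => (l j).toNat) F v = mpder (fun j => (-(l j)).toNat) F v := by
  intro l hl v hv
  by_cases hS : ∀ j, l j ≠ 0 → m (fun k => (a j k : ℝ)) = 0
  · exact hbox l hl hS v hv
  push_neg at hS
  obtain ⟨j0, hj0l, hj0m⟩ := hS
  set M : Fin N → ℝ := fun j => m (fun k => (a j k : ℝ)) with hMdef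
  have key : ∑ j, (l j : ℝ) * M j = 0 := by
    have hl' : ∑ j, l j • a j = 0 := hl
    have h0 : ∑ j, (l j : ℝ) • (fun k => ((a j k : ℝ))) = (0 : Fin r → ℝ) := by
      funext k
      have hk : (∑ j, l j • a j) k = (0 : Fin r → ℤ) k := by rw [hl']
      simp only [Finset.sum_apply, Pi.smul_apply, smul_eq_mul, Pi.zero_apply] at hk
      have hc := congrArg (fun z : ℤ => (z : ℝ)) hk
      push_cast at hc
      simpa using hc
    have hm0 := congrArg m h0
    rw [map_sum] at hm0
    simpa [M, smul_eq_mul] using hm0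
  have hMnn : ∀ j, 0 ≤ M j := hm
  have hpos : ∃ j, 0 < l j ∧ 0 < M j := by
    by_contra hc
    push_neg at hc
    have hterm : ∀ j ∈ Finset.univ, (l j : ℝ) * M j ≤ 0 := by
      intro j _
      rcases le_or_gt (l j) 0 with hle | hgt
      · exact mul_nonpos_of_nonpos_of_nonneg (by exact_mod_cast hle) (hMnn j)
      · have := le_antisymm (hc j hgt) (hMnn j)
        simp [this]
    have hall := (Finset.sum_eq_zero_iff_of_nonpos hterm).1 key j0 (Finset.mem_univ j0)
    rcases mul_eq_zero.1 hall with h1 | h2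
    · exact hj0l (by exact_mod_cast h1)
    · exact hj0m h2
  have hneg : ∃ j, l j < 0 ∧ 0 < M j := by
    by_contra hc
    push_neg at hc
    have hterm : ∀ j ∈ Finset.univ, 0 ≤ (l j : ℝ) * M j := by
      intro j _
      rcases le_or_gt 0 (l j) with hle | hgt
      · exact mul_nonneg (by exact_mod_cast hle) (hMnn j)
      · have := le_antisymm (hc j hgt) (hMnn j)
        simp [this]
    have hall := (Finset.sum_eq_zero_iff_of_nonneg hterm).1 key j0 (Finset.mem_univ j0)
    rcases mul_eq_zero.1 hall with h1 | h2
    · exact hj0l (by exact_mod_cast h1)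
    · exact hj0m h2
  obtain ⟨jp, hjp, hjpM⟩ := hpos
  obtain ⟨jn, hjn, hjnM⟩ := hneg
  have hLz := mpder_eq_zero hU hF (fun j => (l j).toNat) jp
    (by omega : (l jp).toNat ≠ 0)
    (hvanish jp (ne_of_gt hjpM)) v hv
  have hRz := mpder_eq_zero hU hF (fun j => (-(l j)).toNat) jn
    (by omega : (-(l jn)).toNat ≠ 0)
    (hvanish jn (ne_of_gt hjnM)) v hv
  rw [hLz, hRz]
end

section
/- Let J, J' ⊆ {1, …, N} be distinct subsets, each of cardinality r, such that the vectors {a_j : j ∈ J} are linearly independent over ℝ and the vectors {a_j : j ∈ J'} are linearly independent over ℝ. Let α ∈ ℂ^r, and let γ, γ' ∈ ℂ^N satisfy ∑_{j=1}^N γ_j a_j = ∑_{j=1}^N γ'_j a_j = α in ℂ^r (identifying each a_j with its image in ℂ^r), with γ_j ∈ ℤ for all j ∉ J and γ'_j ∈ ℤ for all j ∉ J'. Assume that for every i ∈ J there is no z ∈ ℤ^r such that α + z lies in the ℂ-linear span of {a_j : j ∈ J, j ≠ i} in ℂ^r. Then γ − γ' ∉ L. -/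
open scoped BigOperators

/-- Two parameters `γ, γ'` adapted to two distinct simplices `J ≠ J'`, both representing a
parameter `α` that avoids the span of every facet of the simplex `J` modulo `ℤ^r`,
are inequivalent modulo the lattice `L`. -/
theorem stmt_12 (r N : ℕ) (hr : 1 ≤ r) (hrN : r < N)
    (a : Fin N → Fin r → ℤ)
    (hspan : Submodule.span ℤ (Set.range a) = ⊤)
    (h : (Fin r → ℤ) →ₗ[ℤ] ℤ) (hh : ∀ j, h (a j) = 1)
    (J J' : Finset (Fin N)) (hne : J ≠ J') (hJcard : J.card = r) (hJ'card : J'.card = r)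
    (hindJ : LinearIndependent ℝ (fun j : {j : Fin N // j ∈ J} => fun k => (a j.1 k : ℝ)))
    (hindJ' : LinearIndependent ℝ (fun j : {j : Fin N // j ∈ J'} => fun k => (a j.1 k : ℝ)))
    (α : Fin r → ℂ) (γ γ' : Fin N → ℂ)
    (hγ : (∑ j, γ j • fun k => ((a j k : ℤ) : ℂ)) = α)
    (hγ' : (∑ j, γ' j • fun k => ((a j k : ℤ) : ℂ)) = α)
    (hγint : ∀ j ∉ J, ∃ z : ℤ, γ j = (z : ℂ))
    (hγ'int : ∀ j ∉ J', ∃ z : ℤ, γ' j = (z : ℂ))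
    (hres : ∀ i ∈ J, ¬∃ z : Fin r → ℤ, (fun k => α k + (z k : ℂ)) ∈
      Submodule.span ℂ {x : Fin r → ℂ | ∃ j ∈ J, j ≠ i ∧ x = fun k => ((a j k : ℤ) : ℂ)}) :
    ¬∃ l ∈ latticeL a, (fun j => ((l j : ℤ) : ℂ)) = γ - γ' := by
  rintro ⟨l, hl, hlγ⟩
  have hJJ' : ¬ J ⊆ J' := fun hsub => hne (Finset.eq_of_subset_of_card_le hsub (by omega))
  obtain ⟨i, hiJ, hiJ'⟩ := Finset.not_subset.mp hJJ'
  obtain ⟨z', hz'⟩ := hγ'int i hiJ'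
  have hγi : γ i = ((l i + z' : ℤ) : ℂ) := by
    have h1 := congrFun hlγ i
    simp only [Pi.sub_apply] at h1
    push_cast
    rw [hz'] at h1
    linear_combination -h1
  choose g hg using hγint
  set G : Fin N → ℂ := fun j => if hj : j ∉ J then ((g j hj : ℤ) : ℂ) else 0 with hG
  have hGint : ∀ j, ∃ m : ℤ, G j = (m : ℂ) := by
    intro j
    by_cases hj : j ∉ J
    · exact ⟨g j hj, by simp [hG, hj]⟩
    · exact ⟨0, by simp [hG, hj]⟩
  choose m hm using hGint
  have hGγ : ∀ j ∉ J, γ j = G j := by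
    intro j hj
    simp [hG, hj, hg j hj]
  refine hres i hiJ ⟨fun k => -((l i + z') * a i k + ∑ j ∈ Jᶜ, m j * a j k), ?_⟩
  have key : (fun k => α k + ((-((l i + z') * a i k + ∑ j ∈ Jᶜ, m j * a j k) : ℤ) : ℂ))
      = ∑ j ∈ J.erase i, γ j • (fun k => ((a j k : ℤ) : ℂ)) := by
    funext k
    have hα : α k = ∑ j, γ j * ((a j k : ℤ) : ℂ) := by
      rw [← hγ]; simp [Finset.sum_apply]
    rw [hα, ← Finset.sum_add_sum_compl J (fun j => γ j * ((a j k : ℤ) : ℂ)),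
      ← Finset.add_sum_erase J _ hiJ]
    have hc : ∀ j ∈ Jᶜ, γ j * ((a j k : ℤ) : ℂ) = ((m j * a j k : ℤ) : ℂ) := by
      intro j hj
      rw [hGγ j (Finset.mem_compl.mp hj), hm j]; push_cast; ring
    rw [Finset.sum_congr rfl hc]
    simp only [Finset.sum_apply, Pi.smul_apply, smul_eq_mul]
    rw [hγi]
    push_cast
    ring
  rw [key]
  refine Submodule.sum_mem _ fun j hj => Submodule.smul_mem _ _ (Submodule.subset_span ?_)
  exact ⟨j, Finset.mem_of_mem_erase hj, Finset.ne_of_mem_erase hj, rfl⟩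
end
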